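/- arXiv:2407.06381 — 4 statements merged into one kernel-verified Lean document; each statement's English description precedes it below -/
import Mathlib

section
/- If φ : ℝ × ℝ → ℝ is a smooth positive function satisfying the heat equation φ_t = φ_xx, then the function u = -2 φ_x / φ satisfies the Burgers equation u_t + u u_x - u_xx = 0. -/
/-- partial derivative with respect to the first (time) variable -/
noncomputable def pt (f : ℝ → ℝ → ℝ) (t x : ℝ) : ℝ := deriv (fun s => f s x) t

/-- partial derivative with respect to the second (space) variable -/
noncomputable def px (f : ℝ → ℝ → ℝ) (t x : ℝ) : ℝ := deriv (fun y => f t y) x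

/-- second partial derivative with respect to the space variable -/
noncomputable def pxx (f : ℝ → ℝ → ℝ) (t x : ℝ) : ℝ := deriv (fun y => px f t y) x

noncomputable def Dv (v : ℝ × ℝ) (h : ℝ × ℝ → ℝ) : ℝ × ℝ → ℝ := fun p => fderiv ℝ h p v

lemma Dv_contDiff {h : ℝ × ℝ → ℝ} (hh : ContDiff ℝ (⊤ : ℕ∞) h) (v : ℝ × ℝ) :
    ContDiff ℝ (⊤ : ℕ∞) (Dv v h) :=
  (hh.fderiv_right (by simp)).clm_apply contDiff_const

lemma hasDerivAt_x {h : ℝ × ℝ → ℝ} (hh : ContDiff ℝ (⊤ : ℕ∞) h) (t x : ℝ) :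
    HasDerivAt (fun y => h (t, y)) (Dv (0,1) h (t, x)) x := by
  have h1 : HasDerivAt (fun y : ℝ => ((t, y) : ℝ × ℝ)) ((0 : ℝ), (1 : ℝ)) x :=
    (hasDerivAt_const x t).prodMk (hasDerivAt_id x)
  exact ((hh.differentiable (by simp)) (t, x)).hasFDerivAt.comp_hasDerivAt x h1

lemma hasDerivAt_t {h : ℝ × ℝ → ℝ} (hh : ContDiff ℝ (⊤ : ℕ∞) h) (t x : ℝ) :
    HasDerivAt (fun s => h (s, x)) (Dv (1,0) h (t, x)) t := by
  have h1 : HasDerivAt (fun s : ℝ => ((s, x) : ℝ × ℝ)) ((1 : ℝ), (0 : ℝ)) t :=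
    (hasDerivAt_id t).prodMk (hasDerivAt_const t x)
  exact ((hh.differentiable (by simp)) (t, x)).hasFDerivAt.comp_hasDerivAt t h1

lemma Dv_comm {h : ℝ × ℝ → ℝ} (hh : ContDiff ℝ (⊤ : ℕ∞) h) (v w p) :
    Dv v (Dv w h) p = Dv w (Dv v h) p := by
  have hdf : ∀ q, DifferentiableAt ℝ (fderiv ℝ h) q :=
    fun q => ((hh.fderiv_right (m := 1) (WithTop.coe_le_coe.mpr le_top)).differentiable one_ne_zero) q
  have key : ∀ a b : ℝ × ℝ, Dv a (Dv b h) p = fderiv ℝ (fderiv ℝ h) p a b := by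
    intro a b
    have : Dv b h = (ContinuousLinearMap.apply ℝ ℝ b) ∘ (fderiv ℝ h) := rfl
    rw [Dv, this, fderiv_comp p ((ContinuousLinearMap.apply ℝ ℝ b).differentiableAt) (hdf p),
      ContinuousLinearMap.fderiv]
    rfl
  rw [key, key]
  have hs : IsSymmSndFDerivAt ℝ h p := hh.contDiffAt.isSymmSndFDerivAt (by rw [minSmoothness_of_isRCLikeNormedField]; exact WithTop.coe_le_coe.mpr le_top)
  exact hs v w

/-- Hopf–Cole transformation: if `φ` is a smooth positive solution of the heat
equation, then `u = -2 φ_x / φ` solves the Burgers equation. -/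
theorem hopf_cole_burgers (φ : ℝ → ℝ → ℝ)
    (hφ : ContDiff ℝ (⊤ : ℕ∞) (Function.uncurry φ))
    (hpos : ∀ t x, 0 < φ t x)
    (hheat : ∀ t x, pt φ t x = pxx φ t x)
    (u : ℝ → ℝ → ℝ)
    (hu : ∀ t x, u t x = -2 * px φ t x / φ t x) :
    ∀ t x, pt u t x + u t x * px u t x - pxx u t x = 0 := by
  set f : ℝ × ℝ → ℝ := Function.uncurry φ with hf
  set F1 : ℝ × ℝ → ℝ := Dv (0,1) f with hF1d
  set F2 : ℝ × ℝ → ℝ := Dv (0,1) F1 with hF2d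
  set F3 : ℝ × ℝ → ℝ := Dv (0,1) F2 with hF3d
  have hF1 : ContDiff ℝ (⊤ : ℕ∞) F1 := Dv_contDiff hφ _
  have hF2 : ContDiff ℝ (⊤ : ℕ∞) F2 := Dv_contDiff hF1 _
  have hfa : ∀ t x : ℝ, f (t, x) = φ t x := fun t x => rfl
  -- basic identifications
  have eB : ∀ t x, px φ t x = F1 (t, x) := fun t x => (hasDerivAt_x hφ t x).deriv
  have HxB : ∀ t x, HasDerivAt (fun y => px φ t y) (F2 (t, x)) x := by
    intro t x
    have h := hasDerivAt_x hF1 t x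
    rwa [show (fun y => F1 (t, y)) = fun y => px φ t y from funext fun y => (eB t y).symm] at h
  have eC : ∀ t x, pxx φ t x = F2 (t, x) := fun t x => (HxB t x).deriv
  have HxC : ∀ t x, HasDerivAt (fun y => pxx φ t y) (F3 (t, x)) x := by
    intro t x
    have h := hasDerivAt_x hF2 t x
    rwa [show (fun y => F2 (t, y)) = fun y => pxx φ t y from funext fun y => (eC t y).symm] at h
  -- heat equation: Dv (1,0) f = F2
  have heat : Dv (1,0) f = F2 := by
    funext p
    obtain ⟨t, x⟩ := p
    have h1 : pt φ t x = Dv (1,0) f (t, x) := (hasDerivAt_t hφ t x).deriv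
    rw [← h1, hheat, eC]
  have HtA : ∀ t x, HasDerivAt (fun s => φ s x) (F2 (t, x)) t := by
    intro t x
    have h := hasDerivAt_t hφ t x
    rwa [heat] at h
  have HtB : ∀ t x, HasDerivAt (fun s => px φ s x) (F3 (t, x)) t := by
    intro t x
    have h := hasDerivAt_t hF1 t x
    have e : Dv (1,0) F1 (t, x) = F3 (t, x) := by
      rw [hF1d, Dv_comm hφ, heat]
    rw [e] at h
    rwa [show (fun s => F1 (s, x)) = fun s => px φ s x from funext fun s => (eB s x).symm] at h
  have HxA : ∀ t x, HasDerivAt (fun y => φ t y) (F1 (t, x)) x := fun t x => hasDerivAt_x hφ t x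
  intro t x
  have ha : ∀ t x, φ t x ≠ 0 := fun t x => (hpos t x).ne'
  -- formula for px u
  have hpxu : ∀ t x, px u t x =
      (-2 * F2 (t,x) * φ t x - -2 * F1 (t,x) * F1 (t,x)) / φ t x ^ 2 := by
    intro t x
    have h : HasDerivAt (fun y => -2 * px φ t y / φ t y)
        ((-2 * F2 (t,x) * φ t x - -2 * F1 (t,x) * F1 (t,x)) / φ t x ^ 2) x := by
      have := (((HxB t x).const_mul (-2)).fun_div (HxA t x) (ha t x))
      rw [eB] at this
      exact this
    have h2 : (fun y => u t y) = fun y => -2 * px φ t y / φ t y := funext fun y => hu t y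
    rw [px, h2, h.deriv]
  -- formula for pt u
  have hptu : pt u t x =
      (-2 * F3 (t,x) * φ t x - -2 * F1 (t,x) * F2 (t,x)) / φ t x ^ 2 := by
    have h : HasDerivAt (fun s => -2 * px φ s x / φ s x)
        ((-2 * F3 (t,x) * φ t x - -2 * F1 (t,x) * F2 (t,x)) / φ t x ^ 2) t := by
      have := (((HtB t x).const_mul (-2)).fun_div (HtA t x) (ha t x))
      rw [eB] at this
      exact this
    have h2 : (fun s => u s x) = fun s => -2 * px φ s x / φ s x := funext fun s => hu s x
    rw [pt, h2, h.deriv]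
  -- formula for pxx u
  have h2 : (fun y => px u t y) = fun y =>
      (-2 * pxx φ t y * φ t y - -2 * px φ t y * px φ t y) / φ t y ^ 2 := by
    funext y
    rw [hpxu t y, eC, eB]
  have hnum := (((HxC t x).const_mul (-2)).mul (HxA t x)).sub
      (((HxB t x).const_mul (-2)).mul (HxB t x))
  have hden : HasDerivAt (fun y => φ t y ^ 2) (2 * φ t x ^ 1 * F1 (t, x)) x := by
    simpa using (HxA t x).fun_pow 2
  have h := hnum.div hden (pow_ne_zero 2 (ha t x))
  have h3 : pxx u t x =
      ((-2 * F3 (t, x) * φ t x + -2 * pxx φ t x * F1 (t, x) -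
          (-2 * F2 (t, x) * px φ t x + -2 * px φ t x * F2 (t, x))) * φ t x ^ 2 -
        (-2 * pxx φ t x * φ t x - -2 * px φ t x * px φ t x) * (2 * φ t x ^ 1 * F1 (t, x))) /
      (φ t x ^ 2) ^ 2 := by
    rw [pxx, h2]
    exact h.deriv
  rw [eC, eB] at h3
  rw [hptu, h3, hpxu, hu, eB]
  have ha' : φ t x ≠ 0 := ha t x
  field_simp
  ring
end

section
/- If Φ : ℝ × ℝ → Matrix (Fin m) (Fin m) ℝ is smooth with Φ(t,x) invertible for all (t,x) and satisfies the matrix heat equation Φ_t = Φ_xx, then the matrix-valued function Ω = -2 Φ_x Φ⁻¹ satisfies the matrix Burgers equation Ω_t + Ω_x Ω - Ω_xx = 0. -/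
attribute [local instance] Matrix.normedAddCommGroup Matrix.normedSpace

variable {m : ℕ}

/-- time partial derivative of a matrix-valued function -/
noncomputable def mpt (f : ℝ → ℝ → Matrix (Fin m) (Fin m) ℝ) (t x : ℝ) :
    Matrix (Fin m) (Fin m) ℝ := deriv (fun s => f s x) t

/-- space partial derivative of a matrix-valued function -/
noncomputable def mpx (f : ℝ → ℝ → Matrix (Fin m) (Fin m) ℝ) (t x : ℝ) :
    Matrix (Fin m) (Fin m) ℝ := deriv (fun y => f t y) x

/-- second space partial derivative of a matrix-valued function -/
noncomputable def mpxx (f : ℝ → ℝ → Matrix (Fin m) (Fin m) ℝ) (t x : ℝ) :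
    Matrix (Fin m) (Fin m) ℝ := deriv (fun y => mpx f t y) x

section aux
variable {E F : Type*} [NormedAddCommGroup E] [NormedSpace ℝ E]
  [NormedAddCommGroup F] [NormedSpace ℝ F]

lemma contDiff_fderiv_apply {f : E → F} (hf : ContDiff ℝ (⊤ : ℕ∞) f) (v : E) :
    ContDiff ℝ (⊤ : ℕ∞) fun p => fderiv ℝ f p v :=
  (ContinuousLinearMap.apply ℝ F v).contDiff.comp (hf.fderiv_right (by simp))

lemma hasDerivAt_slice_x {f : ℝ × ℝ → F} {t x : ℝ} (hf : DifferentiableAt ℝ f (t, x)) :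
    HasDerivAt (fun y => f (t, y)) (fderiv ℝ f (t, x) (0, 1)) x :=
  hf.hasFDerivAt.comp_hasDerivAt x ((hasDerivAt_const x t).prodMk (hasDerivAt_id x))

lemma hasDerivAt_slice_t {f : ℝ × ℝ → F} {t x : ℝ} (hf : DifferentiableAt ℝ f (t, x)) :
    HasDerivAt (fun s => f (s, x)) (fderiv ℝ f (t, x) (1, 0)) t :=
  hf.hasFDerivAt.comp_hasDerivAt t ((hasDerivAt_id t).prodMk (hasDerivAt_const t x))

lemma fderiv_apply_swap {f : ℝ × ℝ → F} (hf : ContDiff ℝ (⊤ : ℕ∞) f) (p : ℝ × ℝ)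
    (v w : ℝ × ℝ) :
    fderiv ℝ (fun q => fderiv ℝ f q v) p w = fderiv ℝ (fun q => fderiv ℝ f q w) p v := by
  have hsym : IsSymmSndFDerivAt ℝ f p :=
    (hf.contDiffAt).isSymmSndFDerivAt
      (by rw [minSmoothness_of_isRCLikeNormedField]; exact WithTop.coe_le_coe.2 le_top)
  have hd : DifferentiableAt ℝ (fderiv ℝ f) p :=
    ((hf.fderiv_right (m := (⊤:ℕ∞)) (by decide)).differentiable (by decide)) p
  have key : ∀ u : ℝ × ℝ,
      HasFDerivAt (fun q => fderiv ℝ f q u)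
        ((fderiv ℝ f p).comp 0 + (fderiv ℝ (fderiv ℝ f) p).flip u) p := fun u =>
    hd.hasFDerivAt.clm_apply (hasFDerivAt_const u p)
  rw [(key v).fderiv, (key w).fderiv]
  simpa using hsym w v

end aux

section mat
variable {E : Type*} [NormedAddCommGroup E] [NormedSpace ℝ E] {n : ℕ}

/-- entry projection as a continuous linear map -/
noncomputable def entryCLM (i j : Fin n) :
    Matrix (Fin n) (Fin n) ℝ →L[ℝ] ℝ :=
  LinearMap.toContinuousLinearMap
    { toFun := fun A => A i j
      map_add' := fun _ _ => rfl
      map_smul' := fun _ _ => rfl }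

lemma contDiff_entry {f : E → Matrix (Fin n) (Fin n) ℝ} (hf : ContDiff ℝ (⊤ : ℕ∞) f)
    (i j : Fin n) : ContDiff ℝ (⊤ : ℕ∞) fun p => f p i j :=
  (entryCLM i j).contDiff.comp hf

/-- building a matrix from smooth entries -/
lemma contDiff_of_entries {f : E → Matrix (Fin n) (Fin n) ℝ}
    (hf : ∀ i j, ContDiff ℝ (⊤ : ℕ∞) fun p => f p i j) :
    ContDiff ℝ (⊤ : ℕ∞) f := by
  refine contDiff_pi.2 ?_
  intro i
  refine contDiff_pi.2 ?_
  intro j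
  exact hf i j

lemma contDiff_det {f : E → Matrix (Fin n) (Fin n) ℝ} (hf : ContDiff ℝ (⊤ : ℕ∞) f) :
    ContDiff ℝ (⊤ : ℕ∞) fun p => (f p).det := by
  have : (fun p => (f p).det) =
      fun p => ∑ σ : Equiv.Perm (Fin n),
        ((Equiv.Perm.sign σ : ℤ) : ℝ) * ∏ i, f p (σ i) i := by
    funext p; rw [Matrix.det_apply']
  rw [this]
  exact ContDiff.sum fun σ _ =>
    contDiff_const.mul (contDiff_prod fun i _ => contDiff_entry hf (σ i) i)

lemma contDiff_adjugate {f : E → Matrix (Fin n) (Fin n) ℝ} (hf : ContDiff ℝ (⊤ : ℕ∞) f) :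
    ContDiff ℝ (⊤ : ℕ∞) fun p => (f p).adjugate := by
  apply contDiff_of_entries
  intro i j
  have : (fun p => (f p).adjugate i j) =
      fun p => ((f p).updateRow j (Pi.single i 1)).det := by
    funext p; rw [Matrix.adjugate_apply]
  rw [this]
  apply contDiff_det
  apply contDiff_of_entries
  intro k l
  by_cases hk : k = j
  · subst hk
    simpa [Matrix.updateRow_apply] using contDiff_const
  · simpa [Matrix.updateRow_apply, hk] using contDiff_entry hf k l

lemma contDiff_inv_matrix {f : E → Matrix (Fin n) (Fin n) ℝ}
    (hf : ContDiff ℝ (⊤ : ℕ∞) f) (h : ∀ p, IsUnit (f p).det) :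
    ContDiff ℝ (⊤ : ℕ∞) fun p => (f p)⁻¹ := by
  have : (fun p => (f p)⁻¹) = fun p => ((f p).det)⁻¹ • (f p).adjugate := by
    funext p
    rw [Matrix.inv_def, Ring.inverse_eq_inv']
  rw [this]
  exact ((contDiff_det hf).inv fun p => (h p).ne_zero).smul (contDiff_adjugate hf)

noncomputable instance instNACGmatCLM :
    NormedAddCommGroup (Matrix (Fin n) (Fin n) ℝ →L[ℝ] Matrix (Fin n) (Fin n) ℝ) :=
  ContinuousLinearMap.toNormedAddCommGroup

noncomputable instance instNSmatCLM :
    NormedSpace ℝ (Matrix (Fin n) (Fin n) ℝ →L[ℝ] Matrix (Fin n) (Fin n) ℝ) :=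
  ContinuousLinearMap.toNormedSpace

/-- matrix multiplication as a continuous bilinear map -/
noncomputable def mulCLM :
    Matrix (Fin n) (Fin n) ℝ →L[ℝ] Matrix (Fin n) (Fin n) ℝ →L[ℝ] Matrix (Fin n) (Fin n) ℝ :=
  LinearMap.toContinuousLinearMap
    { toFun := fun A => LinearMap.toContinuousLinearMap (LinearMap.mulLeft ℝ A)
      map_add' := by
        intro A B; ext C i j
        simp [Matrix.add_mul]
      map_smul' := by
        intro r A; ext C i j
        simp [Matrix.smul_mul] }

@[simp] lemma mulCLM_apply (A B : Matrix (Fin n) (Fin n) ℝ) : mulCLM A B = A * B := rfl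

lemma HasDerivAt.matmul {f g : ℝ → Matrix (Fin n) (Fin n) ℝ} {f' g' : Matrix (Fin n) (Fin n) ℝ}
    {x : ℝ} (hf : HasDerivAt f f' x) (hg : HasDerivAt g g' x) :
    HasDerivAt (fun y => f y * g y) (f' * g x + f x * g') x := by
  have hc : HasDerivAt (fun y => mulCLM (f y)) (mulCLM f') x :=
    mulCLM.hasFDerivAt.comp_hasDerivAt x hf
  exact hc.clm_apply hg

end mat


/-- Matrix Hopf–Cole transformation: if `Φ` is a smooth, everywhere invertible
matrix solution of the matrix heat equation `Φ_t = Φ_xx`, then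
`Ω = -2 Φ_x Φ⁻¹` solves the matrix Burgers equation `Ω_t + Ω_x Ω - Ω_xx = 0`. -/
theorem matrix_hopf_cole_burgers (Φ : ℝ → ℝ → Matrix (Fin m) (Fin m) ℝ)
    (hΦ : ContDiff ℝ (⊤ : ℕ∞) (Function.uncurry Φ))
    (hinv : ∀ t x, IsUnit (Φ t x).det)
    (hheat : ∀ t x, mpt Φ t x = mpxx Φ t x)
    (Ω : ℝ → ℝ → Matrix (Fin m) (Fin m) ℝ)
    (hΩ : ∀ t x, Ω t x = (-2 : ℝ) • (mpx Φ t x * (Φ t x)⁻¹)) :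
    ∀ t x, mpt Ω t x + mpx Ω t x * Ω t x - mpxx Ω t x = 0 := by
  classical
  have hsm : ContDiff ℝ (⊤ : ℕ∞) (Function.uncurry Φ) := hΦ.of_le (by simp)
  set F := Function.uncurry Φ with hFdef
  set Fx : ℝ × ℝ → Matrix (Fin m) (Fin m) ℝ := fun p => fderiv ℝ F p (0, 1) with hFxdef
  have hFxsm : ContDiff ℝ (⊤ : ℕ∞) Fx := contDiff_fderiv_apply hsm _
  set Fxx : ℝ × ℝ → Matrix (Fin m) (Fin m) ℝ := fun p => fderiv ℝ Fx p (0, 1) with hFxxdef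
  have hFxxsm : ContDiff ℝ (⊤ : ℕ∞) Fxx := contDiff_fderiv_apply hFxsm _
  set Fxxx : ℝ × ℝ → Matrix (Fin m) (Fin m) ℝ := fun p => fderiv ℝ Fxx p (0, 1) with hFxxxdef
  set N : ℝ × ℝ → Matrix (Fin m) (Fin m) ℝ := fun p => (F p)⁻¹ with hNdef
  have hNsm : ContDiff ℝ (⊤ : ℕ∞) N := contDiff_inv_matrix hsm fun p => hinv p.1 p.2
  have dsm : ∀ (f : ℝ × ℝ → Matrix (Fin m) (Fin m) ℝ), ContDiff ℝ (⊤ : ℕ∞) f →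
      ∀ p, DifferentiableAt ℝ f p := fun f hf p => (hf.differentiable (by decide)) p
  -- x-slices
  have hAx : ∀ t x, HasDerivAt (fun y => Φ t y) (Fx (t, x)) x := fun t x =>
    hasDerivAt_slice_x (dsm F hsm (t, x))
  have hmpx : ∀ t x, mpx Φ t x = Fx (t, x) := fun t x => (hAx t x).deriv
  have hFxslice : ∀ t x, HasDerivAt (fun y => Fx (t, y)) (Fxx (t, x)) x := fun t x =>
    hasDerivAt_slice_x (dsm Fx hFxsm (t, x))
  have hFxxslice : ∀ t x, HasDerivAt (fun y => Fxx (t, y)) (Fxxx (t, x)) x := fun t x =>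
    hasDerivAt_slice_x (dsm Fxx hFxxsm (t, x))
  have hmpxx : ∀ t x, mpxx Φ t x = Fxx (t, x) := by
    intro t x
    have he : (fun y => mpx Φ t y) = fun y => Fx (t, y) := funext fun y => hmpx t y
    rw [mpxx, he]
    exact (hFxslice t x).deriv
  -- t-slices
  have hAt : ∀ t x, HasDerivAt (fun s => Φ s x) (fderiv ℝ F (t, x) (1, 0)) t := fun t x =>
    hasDerivAt_slice_t (dsm F hsm (t, x))
  have hmpt : ∀ t x, mpt Φ t x = fderiv ℝ F (t, x) (1, 0) := fun t x => (hAt t x).deriv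
  have hFt_eq : ∀ p : ℝ × ℝ, fderiv ℝ F p (1, 0) = Fxx p := by
    intro p
    have h := hheat p.1 p.2
    rw [hmpt, hmpxx] at h
    exact h
  have hAt' : ∀ t x, HasDerivAt (fun s => Φ s x) (Fxx (t, x)) t := by
    intro t x
    have := hAt t x
    rwa [hFt_eq (t, x)] at this
  have hBt : ∀ t x, HasDerivAt (fun s => Fx (s, x)) (Fxxx (t, x)) t := by
    intro t x
    have h1 : HasDerivAt (fun s => Fx (s, x)) (fderiv ℝ Fx (t, x) (1, 0)) t :=
      hasDerivAt_slice_t (dsm Fx hFxsm (t, x))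
    have h2 : fderiv ℝ Fx (t, x) (1, 0) =
        fderiv ℝ (fun p => fderiv ℝ F p (1, 0)) (t, x) (0, 1) :=
      fderiv_apply_swap hsm (t, x) (0, 1) (1, 0)
    have h3 : (fun p : ℝ × ℝ => fderiv ℝ F p (1, 0)) = Fxx := funext fun p => hFt_eq p
    rw [h2, h3] at h1
    exact h1
  -- inverse slice derivatives
  have hinv' : ∀ p : ℝ × ℝ, IsUnit (F p).det := fun p => hinv p.1 p.2
  have hNmul : ∀ p : ℝ × ℝ, N p * F p = 1 := fun p => Matrix.nonsing_inv_mul _ (hinv' p)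
  have hNmulΦ : ∀ t x, N (t, x) * Φ t x = 1 := fun t x => hNmul (t, x)
  have hNx : ∀ t x, HasDerivAt (fun y => N (t, y))
      (-(N (t, x) * Fx (t, x) * N (t, x))) x := by
    intro t x
    have hd : HasDerivAt (fun y => N (t, y)) (fderiv ℝ N (t, x) (0, 1)) x :=
      hasDerivAt_slice_x (dsm N hNsm (t, x))
    set n' := fderiv ℝ N (t, x) (0, 1) with hn'
    have hmul : HasDerivAt (fun y => Φ t y * N (t, y))
        (Fx (t, x) * N (t, x) + Φ t x * n') x := (hAx t x).matmul hd
    have hone : (fun y => Φ t y * N (t, y)) = fun _ => (1 : Matrix (Fin m) (Fin m) ℝ) :=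
      funext fun y => Matrix.mul_nonsing_inv _ (hinv t y)
    rw [hone] at hmul
    have h0 : Fx (t, x) * N (t, x) + Φ t x * n' = 0 := by
      have h := hmul.deriv
      rw [deriv_const] at h
      exact h.symm
    have h1 : Φ t x * n' = -(Fx (t, x) * N (t, x)) := eq_neg_of_add_eq_zero_right h0
    have h2 : n' = -(N (t, x) * Fx (t, x) * N (t, x)) := by
      calc n' = 1 * n' := (one_mul _).symm
        _ = N (t, x) * Φ t x * n' := by rw [hNmulΦ t x]
        _ = N (t, x) * (Φ t x * n') := by rw [mul_assoc]
        _ = N (t, x) * -(Fx (t, x) * N (t, x)) := by rw [h1]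
        _ = -(N (t, x) * Fx (t, x) * N (t, x)) := by rw [mul_neg, mul_assoc]
    rwa [h2] at hd
  have hNt : ∀ t x, HasDerivAt (fun s => N (s, x))
      (-(N (t, x) * Fxx (t, x) * N (t, x))) t := by
    intro t x
    have hd : HasDerivAt (fun s => N (s, x)) (fderiv ℝ N (t, x) (1, 0)) t :=
      hasDerivAt_slice_t (dsm N hNsm (t, x))
    set n' := fderiv ℝ N (t, x) (1, 0) with hn'
    have hmul : HasDerivAt (fun s => Φ s x * N (s, x))
        (Fxx (t, x) * N (t, x) + Φ t x * n') t := (hAt' t x).matmul hd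
    have hone : (fun s => Φ s x * N (s, x)) = fun _ => (1 : Matrix (Fin m) (Fin m) ℝ) :=
      funext fun s => Matrix.mul_nonsing_inv _ (hinv s x)
    rw [hone] at hmul
    have h0 : Fxx (t, x) * N (t, x) + Φ t x * n' = 0 := by
      have h := hmul.deriv
      rw [deriv_const] at h
      exact h.symm
    have h1 : Φ t x * n' = -(Fxx (t, x) * N (t, x)) := eq_neg_of_add_eq_zero_right h0
    have h2 : n' = -(N (t, x) * Fxx (t, x) * N (t, x)) := by
      calc n' = 1 * n' := (one_mul _).symm
        _ = N (t, x) * Φ t x * n' := by rw [hNmulΦ t x]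
        _ = N (t, x) * (Φ t x * n') := by rw [mul_assoc]
        _ = N (t, x) * -(Fxx (t, x) * N (t, x)) := by rw [h1]
        _ = -(N (t, x) * Fxx (t, x) * N (t, x)) := by rw [mul_neg, mul_assoc]
    rwa [h2] at hd
  -- Ω as a function of the slices
  have hΩfun : ∀ t y, Ω t y = (-2 : ℝ) • (Fx (t, y) * N (t, y)) := by
    intro t y
    rw [hΩ t y, hmpx t y]
    rfl
  have hΩx : ∀ t x, HasDerivAt (fun y => Ω t y)
      ((-2 : ℝ) • (Fxx (t, x) * N (t, x) +
        Fx (t, x) * -(N (t, x) * Fx (t, x) * N (t, x)))) x := by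
    intro t x
    have h := ((hFxslice t x).matmul (hNx t x)).const_smul (-2 : ℝ)
    rw [show (fun y => Ω t y) = fun y => (-2 : ℝ) • (Fx (t, y) * N (t, y)) from
      funext fun y => hΩfun t y]
    exact h
  have hΩt : ∀ t x, HasDerivAt (fun s => Ω s x)
      ((-2 : ℝ) • (Fxxx (t, x) * N (t, x) +
        Fx (t, x) * -(N (t, x) * Fxx (t, x) * N (t, x)))) t := by
    intro t x
    have h := ((hBt t x).matmul (hNt t x)).const_smul (-2 : ℝ)
    rw [show (fun s => Ω s x) = fun s => (-2 : ℝ) • (Fx (s, x) * N (s, x)) from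
      funext fun s => hΩfun s x]
    exact h
  have hmpxΩ : ∀ t x, mpx Ω t x = (-2 : ℝ) • (Fxx (t, x) * N (t, x) +
      Fx (t, x) * -(N (t, x) * Fx (t, x) * N (t, x))) := fun t x => (hΩx t x).deriv
  -- second x derivative of Ω
  have hW : ∀ t x, HasDerivAt (fun y => (-2 : ℝ) • (Fxx (t, y) * N (t, y) +
      Fx (t, y) * -(N (t, y) * Fx (t, y) * N (t, y))))
      ((-2 : ℝ) • ((Fxxx (t, x) * N (t, x) + Fxx (t, x) * -(N (t, x) * Fx (t, x) * N (t, x))) +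
        (Fxx (t, x) * -(N (t, x) * Fx (t, x) * N (t, x)) +
          Fx (t, x) * -((( -(N (t, x) * Fx (t, x) * N (t, x)) * Fx (t, x) +
            N (t, x) * Fxx (t, x)) * N (t, x)) +
            N (t, x) * Fx (t, x) * -(N (t, x) * Fx (t, x) * N (t, x)))))) x := by
    intro t x
    exact (((hFxxslice t x).matmul (hNx t x)).add ((hFxslice t x).matmul
      ((((hNx t x).matmul (hFxslice t x)).matmul (hNx t x)).neg))).const_smul (-2 : ℝ)
  intro t x
  have hmpxxΩ : mpxx Ω t x = (-2 : ℝ) •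
      ((Fxxx (t, x) * N (t, x) + Fxx (t, x) * -(N (t, x) * Fx (t, x) * N (t, x))) +
        (Fxx (t, x) * -(N (t, x) * Fx (t, x) * N (t, x)) +
          Fx (t, x) * -((( -(N (t, x) * Fx (t, x) * N (t, x)) * Fx (t, x) +
            N (t, x) * Fxx (t, x)) * N (t, x)) +
            N (t, x) * Fx (t, x) * -(N (t, x) * Fx (t, x) * N (t, x))))) := by
    rw [mpxx, show (fun y => mpx Ω t y) = fun y => (-2 : ℝ) • (Fxx (t, y) * N (t, y) +
      Fx (t, y) * -(N (t, y) * Fx (t, y) * N (t, y))) from funext fun y => hmpxΩ t y]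
    exact (hW t x).deriv
  have hmptΩ : mpt Ω t x = (-2 : ℝ) • (Fxxx (t, x) * N (t, x) +
      Fx (t, x) * -(N (t, x) * Fxx (t, x) * N (t, x))) := (hΩt t x).deriv
  rw [hmptΩ, hmpxΩ t x, hmpxxΩ, hΩfun t x]
  set a := Fx (t, x)
  set c := Fxx (t, x)
  set d := Fxxx (t, x)
  set n := N (t, x)
  simp only [mul_neg, neg_mul, mul_add, add_mul, smul_add, smul_neg, neg_neg,
    smul_mul_assoc, mul_smul_comm, smul_smul, mul_assoc]
  module
end

section
/- The five vector fields Ξ₁ = ∂_t, Ξ₂ = ∂_x, Ξ₃ = 2t ∂_t + x ∂_x - u ∂_u - 2v ∂_v, Ξ₄ = t ∂_x + 2 ∂_u - u ∂_v, Ξ₅ = t² ∂_t + t x ∂_x + (2x - t u) ∂_u - (x u + 2 t v + 2) ∂_v on ℝ⁴ with coordinates (t,x,u,v) are closed under the Lie bracket and span a five-dimensional Lie algebra. -/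
abbrev E4 : Type := ℝ × ℝ × ℝ × ℝ

/-- Lie bracket of vector fields on `ℝ⁴`, `[X,Y] = X(Y) - Y(X)`. -/
noncomputable def vbracket (X Y : E4 → E4) : E4 → E4 :=
  fun p => fderiv ℝ Y p (X p) - fderiv ℝ X p (Y p)

/-- The five point symmetry generators of the two-component Burgers-like
system, as vector fields on `ℝ⁴` with coordinates `(t,x,u,v)`. -/
def Xi : Fin 5 → E4 → E4 :=
  ![fun _ => (1, 0, 0, 0),
    fun _ => (0, 1, 0, 0),
    fun p => (2 * p.1, p.2.1, -p.2.2.1, -2 * p.2.2.2),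
    fun p => (0, p.1, 2, -p.2.2.1),
    fun p => (p.1 ^ 2, p.1 * p.2.1, 2 * p.2.1 - p.1 * p.2.2.1,
      -(p.2.1 * p.2.2.1 + 2 * p.1 * p.2.2.2 + 2))]

/-!
All five generators are polynomial of degree at most two, so their Jacobians are computed by the
`HasFDerivAt` calculus and each bracket `[Xi i, Xi j]`, `i < j`, is checked to be a constant
multiple of a generator (or zero); antisymmetry of the bracket covers the remaining pairs.
Linear independence is seen from the values of the fields at two points.
-/

lemma vbracket_swap (X Y : E4 → E4) : vbracket Y X = -vbracket X Y := by
  funext p; simp [vbracket]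

lemma vbracket_self (X : E4 → E4) : vbracket X X = 0 := by
  funext p; simp [vbracket]

lemma vbracket_mem_of_lt {ι : Type*} [LinearOrder ι] {X : ι → E4 → E4}
    {S : Submodule ℝ (E4 → E4)} (h : ∀ i j, i < j → vbracket (X i) (X j) ∈ S) (i j : ι) :
    vbracket (X i) (X j) ∈ S := by
  rcases lt_trichotomy i j with hij | rfl | hji
  · exact h i j hij
  · rw [vbracket_self]; exact S.zero_mem
  · rw [vbracket_swap]; exact S.neg_mem (h j i hji)

section coordinates

variable (p : E4)

lemma hasFDerivAt_t : HasFDerivAt (fun q : E4 => q.1) (ContinuousLinearMap.fst ℝ ℝ _) p :=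
  hasFDerivAt_fst

lemma hasFDerivAt_x : HasFDerivAt (fun q : E4 => q.2.1)
    (ContinuousLinearMap.fst ℝ ℝ _ ∘L ContinuousLinearMap.snd ℝ ℝ _) p :=
  hasFDerivAt_snd.fst

lemma hasFDerivAt_u : HasFDerivAt (fun q : E4 => q.2.2.1)
    (ContinuousLinearMap.fst ℝ ℝ ℝ ∘L ContinuousLinearMap.snd ℝ ℝ _ ∘L
      ContinuousLinearMap.snd ℝ ℝ _) p :=
  hasFDerivAt_snd.snd.fst

lemma hasFDerivAt_v : HasFDerivAt (fun q : E4 => q.2.2.2)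
    (ContinuousLinearMap.snd ℝ ℝ ℝ ∘L ContinuousLinearMap.snd ℝ ℝ _ ∘L
      ContinuousLinearMap.snd ℝ ℝ _) p :=
  hasFDerivAt_snd.snd.snd

end coordinates

section Xi

variable (p w : E4)

@[simp] lemma Xi_zero_apply : Xi 0 p = (1, 0, 0, 0) := rfl
@[simp] lemma Xi_one_apply : Xi 1 p = (0, 1, 0, 0) := rfl
@[simp] lemma Xi_two_apply : Xi 2 p = (2 * p.1, p.2.1, -p.2.2.1, -2 * p.2.2.2) := rfl
@[simp] lemma Xi_three_apply : Xi 3 p = (0, p.1, 2, -p.2.2.1) := rfl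
@[simp] lemma Xi_four_apply : Xi 4 p = (p.1 ^ 2, p.1 * p.2.1, 2 * p.2.1 - p.1 * p.2.2.1,
    -(p.2.1 * p.2.2.1 + 2 * p.1 * p.2.2.2 + 2)) := rfl

@[simp] lemma fderiv_Xi_zero : fderiv ℝ (Xi 0) p w = 0 := by
  simp [show Xi 0 = fun _ => ((1, 0, 0, 0) : E4) from rfl]

@[simp] lemma fderiv_Xi_one : fderiv ℝ (Xi 1) p w = 0 := by
  simp [show Xi 1 = fun _ => ((0, 1, 0, 0) : E4) from rfl]

@[simp] lemma fderiv_Xi_two : fderiv ℝ (Xi 2) p w = (2 * w.1, w.2.1, -w.2.2.1, -2 * w.2.2.2) := by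
  have h : HasFDerivAt (Xi 2) _ p := ((hasFDerivAt_t p).const_mul 2).prodMk
    ((hasFDerivAt_x p).prodMk ((hasFDerivAt_u p).neg.prodMk ((hasFDerivAt_v p).const_mul (-2))))
  simp [h.fderiv]

@[simp] lemma fderiv_Xi_three : fderiv ℝ (Xi 3) p w = (0, w.1, 0, -w.2.2.1) := by
  have h : HasFDerivAt (Xi 3) _ p := (hasFDerivAt_const 0 p).prodMk
    ((hasFDerivAt_t p).prodMk ((hasFDerivAt_const 2 p).prodMk (hasFDerivAt_u p).neg))
  simp [h.fderiv]

@[simp] lemma fderiv_Xi_four : fderiv ℝ (Xi 4) p w =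
    (2 * p.1 * w.1, p.1 * w.2.1 + p.2.1 * w.1, 2 * w.2.1 - (p.1 * w.2.2.1 + p.2.2.1 * w.1),
     -(p.2.1 * w.2.2.1 + p.2.2.1 * w.2.1 + 2 * p.1 * w.2.2.2 + 2 * p.2.2.2 * w.1)) := by
  have ht := hasFDerivAt_t p
  have hx := hasFDerivAt_x p
  have hu := hasFDerivAt_u p
  have h : HasFDerivAt (Xi 4) _ p := (ht.pow 2).prodMk ((ht.mul hx).prodMk
    (((hx.const_mul 2).sub (ht.mul hu)).prodMk
      (((hx.mul hu).add ((ht.const_mul 2).mul (hasFDerivAt_v p))).add_const 2).neg))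
  rw [h.fderiv]
  ext <;> simp; ring

end Xi

lemma vbracket_Xi_zero_one : vbracket (Xi 0) (Xi 1) = 0 := by
  ext p <;> simp [vbracket]

lemma vbracket_Xi_zero_two : vbracket (Xi 0) (Xi 2) = (2 : ℝ) • Xi 0 := by
  ext p <;> simp [vbracket]

lemma vbracket_Xi_zero_three : vbracket (Xi 0) (Xi 3) = Xi 1 := by
  ext p <;> simp [vbracket]

lemma vbracket_Xi_zero_four : vbracket (Xi 0) (Xi 4) = Xi 2 := by
  ext p <;> simp [vbracket]

lemma vbracket_Xi_one_two : vbracket (Xi 1) (Xi 2) = Xi 1 := by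
  ext p <;> simp [vbracket]

lemma vbracket_Xi_one_three : vbracket (Xi 1) (Xi 3) = 0 := by
  ext p <;> simp [vbracket]

lemma vbracket_Xi_one_four : vbracket (Xi 1) (Xi 4) = Xi 3 := by
  ext p <;> simp [vbracket]

lemma vbracket_Xi_two_three : vbracket (Xi 2) (Xi 3) = Xi 3 := by
  ext p <;> simp [vbracket] <;> ring

lemma vbracket_Xi_two_four : vbracket (Xi 2) (Xi 4) = (2 : ℝ) • Xi 4 := by
  ext p <;> simp [vbracket] <;> ring

lemma vbracket_Xi_three_four : vbracket (Xi 3) (Xi 4) = 0 := by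
  ext p <;> simp [vbracket] <;> ring

lemma linearIndependent_Xi : LinearIndependent ℝ Xi := by
  rw [Fintype.linearIndependent_iff]
  intro c hc
  -- `Xi 2` vanishes at the origin, where the other four values are independent;
  -- `(1, 0, 0, 0)` then detects `Xi 2`.
  obtain ⟨h0, h1, h3, h4⟩ : c 0 = 0 ∧ c 1 = 0 ∧ c 3 = 0 ∧ c 4 = 0 := by
    simpa [Fin.sum_univ_five, Prod.ext_iff] using congrFun hc 0
  have h2 : c 2 = 0 := by
    simpa [Fin.sum_univ_five, Prod.ext_iff, h0, h1, h3, h4] using congrFun hc (1, 0, 0, 0)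
  intro i
  fin_cases i <;> assumption

/-- The five vector fields are closed under the Lie bracket and span a
five-dimensional Lie algebra. -/
theorem burgers2_symmetry_algebra :
    (∀ i j : Fin 5, vbracket (Xi i) (Xi j) ∈ Submodule.span ℝ (Set.range Xi)) ∧
    LinearIndependent ℝ Xi := by
  refine ⟨vbracket_mem_of_lt fun i j hij => ?_, linearIndependent_Xi⟩
  have hXi (k : Fin 5) : Xi k ∈ Submodule.span ℝ (Set.range Xi) := Submodule.subset_span ⟨k, rfl⟩
  fin_cases i <;> fin_cases j <;>
    simp [vbracket_Xi_zero_one, vbracket_Xi_zero_two, vbracket_Xi_zero_three, vbracket_Xi_zero_four,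
      vbracket_Xi_one_two, vbracket_Xi_one_three, vbracket_Xi_one_four, vbracket_Xi_two_three,
      vbracket_Xi_two_four, vbracket_Xi_three_four, hXi] at hij ⊢
end

section
/- Let m ≥ 1 and let u₁,…,u_m : ℝ × ℝ → ℝ be smooth. Define Ω(t,x) as the m×m companion matrix with Ω_{i,i+1} = 1 for i = 1,…,m-1, last row Ω_{m,j} = u_{m+1-j}, and all other entries 0. Then Ω satisfies the matrix Burgers equation Ω_t + Ω_x Ω - Ω_xx = 0 if and only if (u₁,…,u_m) satisfies the system u_{α,t} + u_α u_{1,x} - u_{α,xx} + u_{α+1,x} = 0 for α = 1,…,m-1 and u_{m,t} + u_m u_{1,x} - u_{m,xx} = 0. -/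
attribute [local instance] Matrix.normedAddCommGroup Matrix.normedSpace

variable {m : ℕ}

private lemma line_x (t y : ℝ) : HasDerivAt (fun z : ℝ => ((t, z) : ℝ × ℝ)) (0, 1) y :=
  (hasDerivAt_const y t).prodMk (hasDerivAt_id y)

private lemma line_t (x s : ℝ) : HasDerivAt (fun z : ℝ => ((z, x) : ℝ × ℝ)) (1, 0) s :=
  (hasDerivAt_id s).prodMk (hasDerivAt_const s x)

private lemma aux_hx {f : ℝ → ℝ → ℝ} (hf : ContDiff ℝ (⊤ : ℕ∞) (Function.uncurry f)) (t x : ℝ) :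
    HasDerivAt (fun y => f t y) (px f t x) x := by
  have h1 : HasDerivAt (fun y => f t y)
      (fderiv ℝ (Function.uncurry f) (t, x) (0, 1)) x :=
    ((hf.differentiable (by simp) (t, x)).hasFDerivAt).comp_hasDerivAt x (line_x t x)
  have h2 : px f t x = fderiv ℝ (Function.uncurry f) (t, x) (0, 1) := h1.deriv
  rw [h2]; exact h1

private lemma aux_ht {f : ℝ → ℝ → ℝ} (hf : ContDiff ℝ (⊤ : ℕ∞) (Function.uncurry f)) (t x : ℝ) :
    HasDerivAt (fun s => f s x) (pt f t x) t := by
  have h1 : HasDerivAt (fun s => f s x)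
      (fderiv ℝ (Function.uncurry f) (t, x) (1, 0)) t :=
    by have := ((hf.differentiable (by simp) (t, x)).hasFDerivAt).comp_hasDerivAt t (line_t x t); exact this
  have h2 : pt f t x = fderiv ℝ (Function.uncurry f) (t, x) (1, 0) := h1.deriv
  rw [h2]; exact h1

private lemma aux_px_eq {f : ℝ → ℝ → ℝ} (hf : ContDiff ℝ (⊤ : ℕ∞) (Function.uncurry f)) (t y : ℝ) :
    px f t y = fderiv ℝ (Function.uncurry f) (t, y) (0, 1) :=
  (((hf.differentiable (by simp) (t, y)).hasFDerivAt).comp_hasDerivAt y (line_x t y)).deriv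

private lemma aux_hxx {f : ℝ → ℝ → ℝ} (hf : ContDiff ℝ (⊤ : ℕ∞) (Function.uncurry f)) (t x : ℝ) :
    HasDerivAt (fun y => px f t y) (pxx f t x) x := by
  have hc : ContDiff ℝ (⊤ : ℕ∞) (fun p : ℝ × ℝ => fderiv ℝ (Function.uncurry f) p (0, 1)) :=
    ((contDiff_infty_iff_fderiv.mp (hf.of_le (by simp))).2).clm_apply contDiff_const
  have hd : DifferentiableAt ℝ (fun y => px f t y) x := by
    have he : (fun y => px f t y)
        = fun y => fderiv ℝ (Function.uncurry f) (t, y) (0, 1) :=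
      funext fun y => aux_px_eq hf t y
    rw [he]
    exact ((hc.differentiable (by simp)) (t, x)).comp x
      (line_x t x).differentiableAt
  have : pxx f t x = deriv (fun y => px f t y) x := rfl
  rw [this]; exact hd.hasDerivAt

/-- The `m`-component Burgers-like system `Δ_m` (for the functions
`u 1, …, u m`) is equivalent to the matrix Burgers equation for the companion
matrix `Ω` with superdiagonal `1`, last row `(u m, u (m-1), …, u 1)`, and all
other entries `0`. -/
theorem companion_matrix_burgers_iff (m : ℕ) (hm : 1 ≤ m)
    (u : ℕ → ℝ → ℝ → ℝ)
    (hu : ∀ α, 1 ≤ α → α ≤ m → ContDiff ℝ (⊤ : ℕ∞) (Function.uncurry (u α)))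
    (Ω : ℝ → ℝ → Matrix (Fin m) (Fin m) ℝ)
    (hΩ : ∀ t x, ∀ i j : Fin m, Ω t x i j =
      if (i : ℕ) = m - 1 then u (m - (j : ℕ)) t x
      else if (j : ℕ) = (i : ℕ) + 1 then 1 else 0) :
    (∀ t x, mpt Ω t x + mpx Ω t x * Ω t x - mpxx Ω t x = 0) ↔
    ((∀ α, 1 ≤ α → α ≤ m - 1 → ∀ t x,
        pt (u α) t x + u α t x * px (u 1) t x - pxx (u α) t x
          + px (u (α + 1)) t x = 0) ∧
      (∀ t x, pt (u m) t x + u m t x * px (u 1) t x - pxx (u m) t x = 0)) := by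
  have hsm : ∀ j : Fin m, ContDiff ℝ (⊤ : ℕ∞) (Function.uncurry (u (m - (j : ℕ)))) := fun j =>
    hu _ (by have := j.isLt; omega) (by omega)
  -- entrywise formula for mpx Ω
  have hmpx : ∀ t x, mpx Ω t x
      = Matrix.of fun i j : Fin m =>
          if (i : ℕ) = m - 1 then px (u (m - (j : ℕ))) t x else 0 := by
    intro t x
    have hD : HasDerivAt (fun y => Ω t y)
        (Matrix.of fun i j : Fin m =>
          if (i : ℕ) = m - 1 then px (u (m - (j : ℕ))) t x else 0) x := by
      refine hasDerivAt_pi.2 fun i => ?_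
      refine hasDerivAt_pi.2 fun j => ?_
      have he : (fun y => Ω t y i j) = fun y =>
          if (i : ℕ) = m - 1 then u (m - (j : ℕ)) t y
          else if (j : ℕ) = (i : ℕ) + 1 then (1 : ℝ) else 0 :=
        funext fun y => hΩ t y i j
      rw [he]
      by_cases hi : (i : ℕ) = m - 1
      · simp only [Matrix.of_apply, if_pos hi]
        exact aux_hx (hsm j) t x
      · simp only [Matrix.of_apply, if_neg hi]
        split_ifs with hj
        exacts [hasDerivAt_const x 1, hasDerivAt_const x 0]
    exact hD.deriv
  -- entrywise formula for mpt Ω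
  have hmpt : ∀ t x, mpt Ω t x
      = Matrix.of fun i j : Fin m =>
          if (i : ℕ) = m - 1 then pt (u (m - (j : ℕ))) t x else 0 := by
    intro t x
    have hD : HasDerivAt (fun s => Ω s x)
        (Matrix.of fun i j : Fin m =>
          if (i : ℕ) = m - 1 then pt (u (m - (j : ℕ))) t x else 0) t := by
      refine hasDerivAt_pi.2 fun i => ?_
      refine hasDerivAt_pi.2 fun j => ?_
      have he : (fun s => Ω s x i j) = fun s =>
          if (i : ℕ) = m - 1 then u (m - (j : ℕ)) s x
          else if (j : ℕ) = (i : ℕ) + 1 then (1 : ℝ) else 0 :=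
        funext fun s => hΩ s x i j
      rw [he]
      by_cases hi : (i : ℕ) = m - 1
      · simp only [Matrix.of_apply, if_pos hi]
        exact aux_ht (hsm j) t x
      · simp only [Matrix.of_apply, if_neg hi]
        split_ifs with hj
        exacts [hasDerivAt_const t 1, hasDerivAt_const t 0]
    exact hD.deriv
  -- entrywise formula for mpxx Ω
  have hmpxx : ∀ t x, mpxx Ω t x
      = Matrix.of fun i j : Fin m =>
          if (i : ℕ) = m - 1 then pxx (u (m - (j : ℕ))) t x else 0 := by
    intro t x
    have hD : HasDerivAt (fun y => mpx Ω t y)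
        (Matrix.of fun i j : Fin m =>
          if (i : ℕ) = m - 1 then pxx (u (m - (j : ℕ))) t x else 0) x := by
      refine hasDerivAt_pi.2 fun i => ?_
      refine hasDerivAt_pi.2 fun j => ?_
      have he : (fun y => mpx Ω t y i j) = fun y =>
          if (i : ℕ) = m - 1 then px (u (m - (j : ℕ))) t y else 0 :=
        funext fun y => by rw [hmpx t y]; rfl
      rw [he]
      by_cases hi : (i : ℕ) = m - 1
      · simp only [Matrix.of_apply, if_pos hi]
        exact aux_hxx (hsm j) t x
      · simp only [Matrix.of_apply, if_neg hi]
        exact hasDerivAt_const x 0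
    exact hD.deriv
  -- the key entrywise computation
  have hentry : ∀ t x (i j : Fin m),
      (mpt Ω t x + mpx Ω t x * Ω t x - mpxx Ω t x) i j =
      if (i : ℕ) = m - 1 then
        pt (u (m - (j : ℕ))) t x + u (m - (j : ℕ)) t x * px (u 1) t x
          - pxx (u (m - (j : ℕ))) t x
          + (if 1 ≤ (j : ℕ) then px (u (m - (j : ℕ) + 1)) t x else 0)
      else 0 := by
    intro t x i j
    have hmul : (mpx Ω t x * Ω t x) i j
        = ∑ k : Fin m, mpx Ω t x i k * Ω t x k j := Matrix.mul_apply
    rw [Matrix.sub_apply, Matrix.add_apply, hmul, hmpt t x, hmpxx t x]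
    simp only [Matrix.of_apply]
    by_cases hi : (i : ℕ) = m - 1
    · simp only [if_pos hi]
      have hsum : (∑ k : Fin m, mpx Ω t x i k * Ω t x k j)
          = px (u 1) t x * u (m - (j : ℕ)) t x
            + (if 1 ≤ (j : ℕ) then px (u (m - (j : ℕ) + 1)) t x else 0) := by
        have hterm : ∀ k : Fin m, mpx Ω t x i k * Ω t x k j
            = px (u (m - (k : ℕ))) t x *
              (if (k : ℕ) = m - 1 then u (m - (j : ℕ)) t x
               else if (j : ℕ) = (k : ℕ) + 1 then 1 else 0) := by
          intro k
          rw [hmpx t x, hΩ t x k j]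
          simp [Matrix.of_apply, if_pos hi]
        set a : Fin m := ⟨m - 1, by omega⟩ with ha
        have hav : (a : ℕ) = m - 1 := rfl
        have hu1 : m - (m - 1) = 1 := by omega
        by_cases hj : 1 ≤ (j : ℕ)
        · set b : Fin m := ⟨(j : ℕ) - 1, by have := j.isLt; omega⟩ with hb
          have hbv : (b : ℕ) = (j : ℕ) - 1 := rfl
          have hab : a ≠ b := by
            intro h
            have : (a : ℕ) = (b : ℕ) := by rw [h]
            rw [hav, hbv] at this
            have := j.isLt; omega
          have hsplit : ∀ k : Fin m, mpx Ω t x i k * Ω t x k j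
              = (if k = a then px (u 1) t x * u (m - (j : ℕ)) t x else 0)
                + (if k = b then px (u (m - (j : ℕ) + 1)) t x else 0) := by
            intro k
            rw [hterm k]
            by_cases hka : k = a
            · have hkv : (k : ℕ) = m - 1 := by rw [hka]
              have hkb : k ≠ b := by rw [hka]; exact hab
              rw [if_pos hkv, if_pos hka, if_neg hkb, add_zero, hkv, hu1]
            · have hkv : (k : ℕ) ≠ m - 1 := fun h => hka (Fin.ext (h.trans hav.symm))
              rw [if_neg hkv, if_neg hka, zero_add]
              by_cases hkb : k = b
              · have hkvb : (k : ℕ) = (j : ℕ) - 1 := by rw [hkb]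
                have hjk : (j : ℕ) = (k : ℕ) + 1 := by omega
                have hmk : m - (k : ℕ) = m - (j : ℕ) + 1 := by
                  have := j.isLt; omega
                rw [if_pos hjk, if_pos hkb, mul_one, hmk]
              · have hkvb : (k : ℕ) ≠ (j : ℕ) - 1 := fun h =>
                  hkb (Fin.ext (h.trans hbv.symm))
                have hjk : (j : ℕ) ≠ (k : ℕ) + 1 := by omega
                rw [if_neg hjk, if_neg hkb, mul_zero]
          rw [Finset.sum_congr rfl fun k _ => hsplit k, Finset.sum_add_distrib]
          simp [hj]
        · have hj0 : (j : ℕ) = 0 := by omega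
          rw [Finset.sum_eq_single a]
          · rw [hterm a, if_pos hav, hu1]
            simp [hj]
          · intro k _ hka
            rw [hterm k]
            have hkv : (k : ℕ) ≠ m - 1 := fun h => hka (Fin.ext (h.trans hav.symm))
            have hjk : (j : ℕ) ≠ (k : ℕ) + 1 := by omega
            rw [if_neg hkv, if_neg hjk, mul_zero]
          · exact fun h => absurd (Finset.mem_univ a) h
      rw [hsum]
      ring
    · simp only [if_neg hi]
      have : ∀ k : Fin m, mpx Ω t x i k * Ω t x k j = 0 := by
        intro k
        rw [hmpx t x]
        simp [Matrix.of_apply, if_neg hi]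
      rw [Finset.sum_congr rfl fun k _ => this k]
      simp
  -- reformulate the matrix equation entrywise
  have hiff : (∀ t x, mpt Ω t x + mpx Ω t x * Ω t x - mpxx Ω t x = 0) ↔
      (∀ t x (j : Fin m),
        pt (u (m - (j : ℕ))) t x + u (m - (j : ℕ)) t x * px (u 1) t x
          - pxx (u (m - (j : ℕ))) t x
          + (if 1 ≤ (j : ℕ) then px (u (m - (j : ℕ) + 1)) t x else 0) = 0) := by
    constructor
    · intro H t x j
      have := congrFun (congrFun (H t x) ⟨m - 1, by omega⟩) j
      rw [hentry t x ⟨m - 1, by omega⟩ j] at this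
      simpa using this
    · intro H t x
      ext i j
      rw [hentry t x i j]
      by_cases hi : (i : ℕ) = m - 1
      · rw [if_pos hi]
        simpa using H t x j
      · rw [if_neg hi]; simp
  rw [hiff]
  constructor
  · intro H
    constructor
    · intro α h1 h2 t x
      have hjlt : m - α < m := by omega
      have := H t x ⟨m - α, hjlt⟩
      have hval : ((⟨m - α, hjlt⟩ : Fin m) : ℕ) = m - α := rfl
      rw [hval] at this
      have e1 : m - (m - α) = α := by omega
      have e2 : 1 ≤ m - α := by omega
      rw [e1, if_pos e2] at this
      exact this
    · intro t x
      have := H t x ⟨0, by omega⟩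
      have hval : ((⟨0, by omega⟩ : Fin m) : ℕ) = 0 := rfl
      rw [hval] at this
      simpa using this
  · intro ⟨H1, H2⟩ t x j
    by_cases hj : 1 ≤ (j : ℕ)
    · have hjlt := j.isLt
      have h1 : 1 ≤ m - (j : ℕ) := by omega
      have h2 : m - (j : ℕ) ≤ m - 1 := by omega
      have := H1 (m - (j : ℕ)) h1 h2 t x
      have e3 : m - (j : ℕ) + 1 = m - (j : ℕ) + 1 := rfl
      rw [if_pos hj]
      exact this
    · have hj0 : (j : ℕ) = 0 := by omega
      rw [hj0]
      have e1 : m - 0 = m := by omega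
      rw [e1]
      simpa using H2 t x
end
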